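/- Let A and B be positive definite real n×n matrices, and let H be the complex (2n)×(2n) matrix i · [[0, A^{-1/2} B^{-1/2}], [−B^{-1/2} A^{-1/2}, 0]] (blocks regarded as complex matrices entrywise). Suppose w ∈ ℝⁿ is a nonzero eigenvector of the matrix B^{-1/2} A⁻¹ B^{-1/2} with eigenvalue λ. Then λ > 0, and the complex vector w̃ ∈ ℂ^{2n} whose first n entries are w' = (i/√λ) · A^{-1/2} B^{-1/2} w and whose last n entries are w (regarded as complex), satisfies H w̃ = √λ · w̃; moreover the Euclidean norm of w' equals the Euclidean norm of w. -/

import Mathlib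

open Matrix

/-- The positive semidefinite square root of a positive semidefinite matrix, as defined in
the older Mathlib (removed since; restored here with its old definition). -/
noncomputable def Matrix.PosSemidef.sqrt {n : Type*} {𝕜 : Type*} [Fintype n] [RCLike 𝕜]
    [PartialOrder 𝕜] [DecidableEq n] {A : Matrix n n 𝕜} (hA : Matrix.PosSemidef A) : Matrix n n 𝕜 :=
  (hA.1.eigenvectorUnitary : Matrix n n 𝕜) * diagonal ((↑) ∘ (√·) ∘ hA.1.eigenvalues) *
    (star hA.1.eigenvectorUnitary : Matrix n n 𝕜)

/-!
Put `C = A^{-1/2} B^{-1/2}`. The square roots are symmetric, so `Cᵀ = B^{-1/2} A^{-1/2}`, hence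
`H = i [[0, C], [-Cᵀ, 0]]` and `B^{-1/2} A⁻¹ B^{-1/2} = Cᵀ C`. From `Cᵀ C w = λ w` we get
`‖C w‖² = λ ‖w‖²`, which forces `λ > 0` because `C` is invertible; then
`H (w', w) = (i C w, Cᵀ C w / √λ) = √λ (w', w)` and `‖w'‖² = ‖C w‖² / λ = ‖w‖²`.
-/

namespace Matrix.PosSemidef

variable {n : Type*} [Fintype n] [DecidableEq n]

theorem isHermitian_sqrt {𝕜 : Type*} [RCLike 𝕜] [PartialOrder 𝕜] {A : Matrix n n 𝕜}
    (hA : A.PosSemidef) : hA.sqrt.IsHermitian :=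
  isHermitian_mul_mul_conjTranspose _ <| isHermitian_diagonal_of_self_adjoint _ <|
    funext fun _ ↦ RCLike.conj_ofReal _

theorem sqrt_mul_self {A : Matrix n n ℝ} (hA : A.PosSemidef) : hA.sqrt * hA.sqrt = A := by
  let U : Matrix n n ℝ := hA.1.eigenvectorUnitary
  let E := diagonal ((↑) ∘ (√·) ∘ hA.1.eigenvalues : n → ℝ)
  have hEE : E * E = diagonal hA.1.eigenvalues := by
    rw [diagonal_mul_diagonal]
    congr! with i
    simp [Real.mul_self_sqrt (hA.eigenvalues_nonneg i)]
  have hUU : star U * U = 1 := Unitary.coe_star_mul_self _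
  calc hA.sqrt * hA.sqrt = U * (E * E) * star U := by
        change U * E * star U * (U * E * star U) = _
        simp only [mul_assoc, ← mul_assoc (star U), hUU, one_mul]
    _ = A := by
        rw [hEE]
        simpa [Unitary.conjStarAlgAut_apply] using hA.1.spectral_theorem.symm

theorem transpose_sqrt {A : Matrix n n ℝ} (hA : A.PosSemidef) : hA.sqrtᵀ = hA.sqrt := by
  simpa [IsHermitian] using hA.isHermitian_sqrt

theorem inv_sqrt_mul_inv_sqrt {A : Matrix n n ℝ} (hA : A.PosSemidef) :
    hA.sqrt⁻¹ * hA.sqrt⁻¹ = A⁻¹ := by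
  rw [← mul_inv_rev, hA.sqrt_mul_self]

end Matrix.PosSemidef

theorem Matrix.PosDef.isUnit_sqrt {n : Type*} [Fintype n] [DecidableEq n] {A : Matrix n n ℝ}
    (hA : A.PosDef) : IsUnit hA.posSemidef.sqrt :=
  isUnit_of_mul_isUnit_left (hA.posSemidef.sqrt_mul_self ▸ hA.isUnit)

namespace Matrix

variable {m n : Type*} [Fintype n]

theorem map_ofReal_mulVec (M : Matrix m n ℝ) (v : n → ℝ) :
    M.map Complex.ofReal *ᵥ (Complex.ofReal ∘ v) = Complex.ofReal ∘ (M *ᵥ v) :=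
  funext fun i ↦ (RingHom.map_mulVec Complex.ofRealHom M v i).symm

variable [Fintype m]

theorem I_smul_fromBlocks_mulVec_sum_elim (C : Matrix m n ℂ) (D : Matrix n m ℂ) (v : n → ℂ)
    {s : ℂ} (hs : s ≠ 0) (hDC : (D * C) *ᵥ v = s ^ 2 • v) :
    (Complex.I • fromBlocks 0 C (-D) 0) *ᵥ Sum.elim ((Complex.I / s) • C *ᵥ v) v =
      s • Sum.elim ((Complex.I / s) • C *ᵥ v) v := by
  rw [smul_mulVec, fromBlocks_mulVec]
  ext (i | i)
  · simp only [Sum.elim_comp_inl, zero_mulVec, Sum.elim_comp_inr, zero_add, Pi.smul_apply,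
      Sum.elim_inl, smul_eq_mul]
    field_simp
  · simp only [Sum.elim_comp_inl, mulVec_smul, mulVec_mulVec, Matrix.zero_mul, zero_mulVec,
      smul_zero, Sum.elim_comp_inr, zero_add, Matrix.neg_mul, neg_mulVec, hDC, smul_neg, add_zero,
      Pi.smul_apply, Sum.elim_inr, Pi.neg_apply, smul_eq_mul, mul_neg]
    field_simp
    simp [Complex.I_sq]

section TransposeMulSelf

variable {C : Matrix m n ℝ} {w : n → ℝ} {lam : ℝ}

theorem mulVec_dotProduct_mulVec_of_transpose_mul_self_mulVec_eq_smul
    (h : (Cᵀ * C) *ᵥ w = lam • w) : (C *ᵥ w) ⬝ᵥ (C *ᵥ w) = lam * (w ⬝ᵥ w) := by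
  rw [dotProduct_mulVec, vecMul_mulVec, ← dotProduct_mulVec, h, dotProduct_smul, smul_eq_mul,
    dotProduct_comm]

theorem pos_of_transpose_mul_self_mulVec_eq_smul (hCw : C *ᵥ w ≠ 0)
    (h : (Cᵀ * C) *ᵥ w = lam • w) : 0 < lam := by
  have hw : w ≠ 0 := by rintro rfl; simp at hCw
  have hCw_pos : 0 < (C *ᵥ w) ⬝ᵥ (C *ᵥ w) := by simpa using dotProduct_star_self_pos_iff.2 hCw
  have hw_pos : 0 < w ⬝ᵥ w := by simpa using dotProduct_star_self_pos_iff.2 hw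
  rw [mulVec_dotProduct_mulVec_of_transpose_mul_self_mulVec_eq_smul h] at hCw_pos
  exact pos_of_mul_pos_left hCw_pos hw_pos.le

theorem sum_norm_sq_I_div_sqrt_mul_mulVec (hlam : 0 < lam) (h : (Cᵀ * C) *ᵥ w = lam • w) :
    ∑ i, ‖Complex.I / (√lam : ℂ) * ((C *ᵥ w) i : ℂ)‖ ^ 2 = ∑ i, w i ^ 2 := calc
  _ = lam⁻¹ * ((C *ᵥ w) ⬝ᵥ (C *ᵥ w)) := by
    rw [dotProduct, Finset.mul_sum]
    refine Finset.sum_congr rfl fun i _ ↦ ?_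
    simp only [norm_mul, norm_div, Complex.norm_I, Complex.norm_real, Real.norm_eq_abs, div_pow,
      mul_pow, sq_abs, Real.sq_sqrt hlam.le]
    ring
  _ = ∑ i, w i ^ 2 := by
    rw [mulVec_dotProduct_mulVec_of_transpose_mul_self_mulVec_eq_smul h,
      inv_mul_cancel_left₀ hlam.ne', dotProduct]
    simp only [sq]

theorem I_smul_fromBlocks_map_ofReal_mulVec_sum_elim (hlam : 0 < lam)
    (h : (Cᵀ * C) *ᵥ w = lam • w) :
    (Complex.I • (fromBlocks 0 C (-Cᵀ) 0).map Complex.ofReal) *ᵥ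
        Sum.elim (fun i ↦ Complex.I / (√lam : ℂ) * ((C *ᵥ w) i : ℂ)) (fun i ↦ (w i : ℂ)) =
      (√lam : ℂ) •
        Sum.elim (fun i ↦ Complex.I / (√lam : ℂ) * ((C *ᵥ w) i : ℂ)) (fun i ↦ (w i : ℂ)) := by
  have hs : ((√lam : ℝ) : ℂ) ≠ 0 := Complex.ofReal_ne_zero.2 (Real.sqrt_pos.2 hlam).ne'
  have hmap : (fromBlocks 0 C (-Cᵀ) 0).map Complex.ofReal =
      fromBlocks 0 (C.map Complex.ofReal) (-Cᵀ.map Complex.ofReal) 0 := by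
    rw [fromBlocks_map, Matrix.map_neg _ Complex.ofReal_neg,
      Matrix.map_zero _ Complex.ofReal_zero, Matrix.map_zero _ Complex.ofReal_zero]
  have hv : (fun i ↦ Complex.I / (√lam : ℂ) * ((C *ᵥ w) i : ℂ)) =
      (Complex.I / (√lam : ℂ)) • (C.map Complex.ofReal *ᵥ (Complex.ofReal ∘ w)) := by
    rw [map_ofReal_mulVec]
    rfl
  rw [hmap, hv]
  refine I_smul_fromBlocks_mulVec_sum_elim _ _ _ hs ?_
  rw [← mulVec_mulVec, map_ofReal_mulVec, map_ofReal_mulVec, mulVec_mulVec, h,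
    ← Complex.ofReal_pow, Real.sq_sqrt hlam.le]
  ext i
  simp

end TransposeMulSelf

end Matrix

/-- From a real eigenvector `w` of `B^{-1/2} A⁻¹ B^{-1/2}` with eigenvalue `λ`, one obtains
that `λ > 0` and that the complex vector `w̃ = (w', w)`, with
`w' = (i/√λ) · A^{-1/2} B^{-1/2} w`, is an eigenvector of
`H = i · [[0, A^{-1/2} B^{-1/2}], [−B^{-1/2} A^{-1/2}, 0]]` with eigenvalue `√λ`;
moreover `w'` and `w` have the same Euclidean norm. -/
theorem eigenvector_lift_of_blockDiag (n : ℕ) (A B : Matrix (Fin n) (Fin n) ℝ)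
    (hA : A.PosDef) (hB : B.PosDef)
    (H : Matrix (Fin n ⊕ Fin n) (Fin n ⊕ Fin n) ℂ)
    (hH : H = Complex.I •
      ((Matrix.fromBlocks 0 ((hA.posSemidef.sqrt)⁻¹ * (hB.posSemidef.sqrt)⁻¹)
        (-((hB.posSemidef.sqrt)⁻¹ * (hA.posSemidef.sqrt)⁻¹)) 0).map Complex.ofReal))
    (w : Fin n → ℝ) (hw : w ≠ 0) (lam : ℝ)
    (heig : ((hB.posSemidef.sqrt)⁻¹ * A⁻¹ * (hB.posSemidef.sqrt)⁻¹).mulVec w = lam • w)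
    (w' : Fin n → ℂ)
    (hw' : w' = fun i => (Complex.I / (Real.sqrt lam : ℂ)) *
      ((((hA.posSemidef.sqrt)⁻¹ * (hB.posSemidef.sqrt)⁻¹).mulVec w i : ℝ) : ℂ)) :
    0 < lam ∧
    H.mulVec (Sum.elim w' (fun i => ((w i : ℝ) : ℂ))) =
      ((Real.sqrt lam : ℝ) : ℂ) • Sum.elim w' (fun i => ((w i : ℝ) : ℂ)) ∧
    Real.sqrt (∑ i, ‖w' i‖ ^ 2) = Real.sqrt (∑ i, (w i) ^ 2) := by
  set C := hA.posSemidef.sqrt⁻¹ * hB.posSemidef.sqrt⁻¹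
  have hCT : Cᵀ = hB.posSemidef.sqrt⁻¹ * hA.posSemidef.sqrt⁻¹ := by
    rw [transpose_mul, transpose_nonsing_inv, transpose_nonsing_inv,
      hA.posSemidef.transpose_sqrt, hB.posSemidef.transpose_sqrt]
  have hCTC : (Cᵀ * C) *ᵥ w = lam • w := by
    rw [hCT, ← heig, ← hA.posSemidef.inv_sqrt_mul_inv_sqrt]
    simp only [C, mul_assoc]
  have hCw : C *ᵥ w ≠ 0 := by
    have hC : IsUnit C := (isUnit_nonsing_inv_iff.2 hA.isUnit_sqrt).mul
      (isUnit_nonsing_inv_iff.2 hB.isUnit_sqrt)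
    simpa using (mulVec_injective_iff_isUnit.2 hC).ne hw
  have hlam : 0 < lam := pos_of_transpose_mul_self_mulVec_eq_smul hCw hCTC
  subst hH hw'
  refine ⟨hlam, ?_, congrArg Real.sqrt (sum_norm_sq_I_div_sqrt_mul_mulVec hlam hCTC)⟩
  rw [← hCT]
  exact I_smul_fromBlocks_map_ofReal_mulVec_sum_elim hlam hCTC
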